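/- Let R be a finite nonempty set of n rays in the plane. Then the Brocard angle of the plane induced by R satisfies sSup { min_{r ∈ R} d∠(x, r) : x ∈ ℝ² } ≥ 2π/n. -/

import Mathlib

noncomputable section

open Real

abbrev Pt : Type := EuclideanSpace ℝ (Fin 2)

instance : Fact (Module.finrank ℝ Pt = 2) := ⟨finrank_euclideanSpace_fin⟩

noncomputable def stdOrient : Orientation ℝ Pt (Fin 2) :=
  (EuclideanSpace.basisFun (Fin 2) ℝ).toBasis.orientation

/-- A ray in the plane, given by its apex and its direction vector. -/
structure Ray2 where
  apex : Pt
  dir : Pt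

/-- The set of points of a ray. -/
def Ray2.carrier (r : Ray2) : Set Pt := {x | ∃ t : ℝ, 0 ≤ t ∧ x = r.apex + t • r.dir}

/-- The representative in `[0, 2π)` of an angle. -/
noncomputable def angleIco (θ : Real.Angle) : ℝ :=
  if 0 ≤ θ.toReal then θ.toReal else θ.toReal + 2 * π

open Classical in
/-- The counterclockwise angular distance from a point `x` to a ray `r`. -/
noncomputable def adist (x : Pt) (r : Ray2) : ℝ :=
  if x = r.apex then 0 else angleIco (stdOrient.oangle r.dir (x - r.apex))

/-- The Voronoi region of a ray `r` in a finite set of rays `R`. -/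
def rreg (R : Finset Ray2) (r : Ray2) : Set Pt :=
  {x | ∀ s ∈ R, s ≠ r → adist x r < adist x s}

/-- The rotating rays Voronoi diagram. -/
def RVD (R : Finset Ray2) : Set Pt :=
  (Set.univ \ ⋃ r ∈ R, rreg R r) ∪ ⋃ r ∈ R, r.carrier

/-- The point of the plane with the given coordinates. -/
noncomputable def pt (a b : ℝ) : Pt := (WithLp.equiv 2 (Fin 2 → ℝ)).symm ![a, b]

/-!
Seen from a point far away in a direction `w`, the ray `r` is at angular distance close to the
angle from `u(r)` to `w`. For a fixed `c`, the directions `w` making this angle at most `c` form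
an arc of length `c` on the circle of directions, so if `n * c < 2π` these `n` arcs do not cover
the circle. A far point in an uncovered direction is at angular distance more than `c` from
every ray.
-/

open Filter Topology MeasureTheory

theorem AddCircle.exists_forall_notMem_closedBall {T : ℝ} [Fact (0 < T)] {ι : Type*}
    (s : Finset ι) (x : ι → AddCircle T) {ε : ℝ} (h : s.card * (2 * ε) < T) :
    ∃ y, ∀ i ∈ s, y ∉ Metric.closedBall (x i) ε := by
  by_contra! hcover
  have hT : 0 < T := Fact.out
  have hvol : volume (Set.univ : Set (AddCircle T)) ≤ s.card • ENNReal.ofReal (min T (2 * ε)) :=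
    calc volume (Set.univ : Set (AddCircle T))
        ≤ volume (⋃ i ∈ s, Metric.closedBall (x i) ε) :=
          measure_mono fun y _ => by simpa using hcover y
      _ ≤ ∑ i ∈ s, volume (Metric.closedBall (x i) ε) := measure_biUnion_finset_le _ _
      _ = s.card • ENNReal.ofReal (min T (2 * ε)) := by simp [AddCircle.volume_closedBall]
  rw [AddCircle.measure_univ, ← ENNReal.ofReal_nsmul, nsmul_eq_mul,
    ENNReal.ofReal_le_ofReal_iff'] at hvol
  rcases hvol with hvol | hvol
  · nlinarith [min_le_right T (2 * ε)]
  · linarith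

lemma angleIco_nonneg (θ : Real.Angle) : 0 ≤ angleIco θ := by
  unfold angleIco
  split <;> linarith [θ.neg_pi_lt_toReal]

lemma angleIco_lt_two_pi (θ : Real.Angle) : angleIco θ < 2 * π := by
  unfold angleIco
  split <;> linarith [θ.toReal_le_pi, pi_pos]

lemma coe_angleIco (θ : Real.Angle) : (angleIco θ : Real.Angle) = θ := by
  unfold angleIco
  split
  · exact θ.coe_toReal
  · rw [Real.Angle.coe_add, Real.Angle.coe_two_pi, add_zero, θ.coe_toReal]

lemma angleIco_eq_equivIco [Fact (0 < 2 * π)] (θ : Real.Angle) :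
    angleIco θ = AddCircle.equivIco (2 * π) 0 θ := by
  have hmem : angleIco θ ∈ Set.Ico 0 (0 + 2 * π) :=
    ⟨angleIco_nonneg θ, by simpa using angleIco_lt_two_pi θ⟩
  conv_rhs => rw [← coe_angleIco θ]
  exact (congrArg Subtype.val (AddCircle.equivIco_coe_eq hmem)).symm

lemma lowerSemicontinuous_angleIco : LowerSemicontinuous angleIco := by
  have : Fact (0 < 2 * π) := ⟨two_pi_pos⟩
  intro θ c hc
  by_cases hθ : θ = 0
  · have h0 : angleIco θ = 0 := by simp [hθ, angleIco]
    exact Eventually.of_forall fun θ' => (hc.trans_eq h0).trans_le (angleIco_nonneg θ')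
  · have hcont : ContinuousAt angleIco θ := by
      simp only [funext angleIco_eq_equivIco]
      exact continuous_subtype_val.continuousAt.comp
        (AddCircle.continuousAt_equivIco (2 * π) 0 fun h => hθ (h.trans Real.Angle.coe_zero))
    exact hcont.eventually (lt_mem_nhds hc)

lemma exists_forall_lt_angleIco_add {ι : Type*} (s : Finset ι) (θ : ι → Real.Angle) {c : ℝ}
    (hc : s.card * c < 2 * π) : ∃ φ : Real.Angle, ∀ i ∈ s, c < angleIco (θ i + φ) := by
  have : Fact (0 < 2 * π) := ⟨two_pi_pos⟩
  obtain ⟨φ, hφ⟩ : ∃ φ : Real.Angle,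
      ∀ i ∈ s, φ ∉ Metric.closedBall (-θ i + ((c / 2 : ℝ) : Real.Angle)) (c / 2) :=
    AddCircle.exists_forall_notMem_closedBall (T := 2 * π) s
      (fun i => -θ i + ((c / 2 : ℝ) : Real.Angle)) (ε := c / 2) (by linarith)
  refine ⟨φ, fun i hi => lt_of_not_ge fun hle => hφ i hi ?_⟩
  have hdiff : φ - (-θ i + ((c / 2 : ℝ) : Real.Angle)) =
      ((angleIco (θ i + φ) - c / 2 : ℝ) : Real.Angle) := by
    rw [Real.Angle.coe_sub, coe_angleIco]; abel
  rw [Metric.mem_closedBall, dist_eq_norm, hdiff]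
  refine QuotientAddGroup.norm_mk_le_norm.trans ?_
  rw [Real.norm_eq_abs, abs_le]
  constructor <;> linarith [angleIco_nonneg (θ i + φ)]

lemma Orientation.exists_forall_lt_angleIco_oangle {V : Type*} [NormedAddCommGroup V]
    [InnerProductSpace ℝ V] [Fact (Module.finrank ℝ V = 2)] (o : Orientation ℝ V (Fin 2))
    {ι : Type*} (s : Finset ι) (d : ι → V) (hd : ∀ i ∈ s, d i ≠ 0) {c : ℝ}
    (hc : s.card * c < 2 * π) : ∃ w ≠ 0, ∀ i ∈ s, c < angleIco (o.oangle (d i) w) := by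
  have : Nontrivial V := Module.nontrivial_of_finrank_eq_succ (Fact.out : Module.finrank ℝ V = 2)
  obtain ⟨e, he⟩ := exists_ne (0 : V)
  obtain ⟨φ, hφ⟩ := exists_forall_lt_angleIco_add s (fun i => o.oangle (d i) e) hc
  refine ⟨o.rotation φ e, by simpa using he, fun i hi => ?_⟩
  rw [o.oangle_rotation_right (hd i hi) he]
  exact hφ i hi

lemma adist_lt_two_pi (x : Pt) (r : Ray2) : adist x r < 2 * π := by
  unfold adist
  split
  · exact two_pi_pos
  · exact angleIco_lt_two_pi _

lemma eventually_lt_adist_smul {r : Ray2} (hr : r.dir ≠ 0) {w : Pt} (hw : w ≠ 0) {c : ℝ}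
    (hc : c < angleIco (stdOrient.oangle r.dir w)) :
    ∀ᶠ t : ℝ in atTop, c < adist (t • w) r := by
  set v : ℝ → Pt := fun t => w - t⁻¹ • r.apex
  have hv : Tendsto v atTop (𝓝 w) := by
    simpa using tendsto_const_nhds.sub ((tendsto_inv_atTop_zero (𝕜 := ℝ)).smul_const r.apex)
  have hlsc : LowerSemicontinuousAt (fun u => angleIco (stdOrient.oangle r.dir u)) w :=
    (lowerSemicontinuous_angleIco _).comp
      ((stdOrient.continuousAt_oangle (x := (r.dir, w)) hr hw).comp
        (continuousAt_const.prodMk continuousAt_id))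
  filter_upwards [hv.eventually (hlsc c hc), hv.eventually_ne hw, eventually_gt_atTop 0]
    with t hlt hne ht
  have hsub : t • w - r.apex = t • v t := by
    simp [v, smul_sub, smul_smul, mul_inv_cancel₀ ht.ne']
  have hapex : t • w ≠ r.apex := sub_ne_zero.1 (hsub ▸ smul_ne_zero ht.ne' hne)
  rwa [adist, if_neg hapex, hsub, stdOrient.oangle_smul_right_of_pos _ _ ht]

lemma exists_forall_lt_adist (R : Finset Ray2) (hdir : ∀ r ∈ R, r.dir ≠ 0) {c : ℝ}
    (hc : R.card * c < 2 * π) : ∃ x : Pt, ∀ r ∈ R, c < adist x r := by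
  obtain ⟨w, hw, hcw⟩ := stdOrient.exists_forall_lt_angleIco_oangle R Ray2.dir hdir hc
  have hfar : ∀ᶠ t : ℝ in atTop, ∀ r ∈ R, c < adist (t • w) r :=
    (eventually_all_finset R).2 fun r hr => eventually_lt_adist_smul (hdir r hr) hw (hcw r hr)
  obtain ⟨t, ht⟩ := hfar.exists
  exact ⟨t • w, ht⟩

/-- the Brocard angle of the plane induced by `n` rays is at least `2π/n`. -/
theorem stmt5 (R : Finset Ray2) (hR : R.Nonempty) (hdir : ∀ r ∈ R, r.dir ≠ 0) :
    2 * π / R.card ≤ sSup {y : ℝ | ∃ x : Pt, y = R.inf' hR fun r => adist x r} := by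
  have hn : (0 : ℝ) < R.card := by exact_mod_cast hR.card_pos
  have hbdd : BddAbove {y : ℝ | ∃ x : Pt, y = R.inf' hR fun r => adist x r} := by
    refine ⟨2 * π, ?_⟩
    rintro _ ⟨x, rfl⟩
    obtain ⟨r, hr⟩ := hR
    exact (Finset.inf'_le _ hr).trans (adist_lt_two_pi x r).le
  refine le_of_forall_lt fun c hc => ?_
  obtain ⟨x, hx⟩ := exists_forall_lt_adist R hdir (by rwa [lt_div_iff₀' hn] at hc)
  exact ((Finset.lt_inf'_iff _).2 hx).trans_le (le_csSup hbdd ⟨x, rfl⟩)
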